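/- arXiv:2412.05604 — 2 statements merged into one kernel-verified Lean document; each statement's English description precedes it below -/
import Mathlib

section
/- Almost-sure attainment under an optimal strategy (Theorem 1, second claim): for every continuous function f : ℝ^d → ℝ, sup_{θ∈Θ} P( limsup_{n→∞} f(S_n^θ/n) = max_{x∈Γ} f(x) ) = 1. -/
open MeasureTheory ProbabilityTheory Filter Set

noncomputable section

namespace SMCO

/-- The Euclidean norm on `Fin d → ℝ` (note: the default norm `‖·‖` on this Pi type is the
sup-norm `‖·‖_∞`). -/
def euclNorm {d : ℕ} (x : Fin d → ℝ) : ℝ := Real.sqrt (∑ j, x j ^ 2)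

/-- A strategy: a sequence of `{0,1}^d`-valued random vectors, with coordinates encoded by
`Bool` (`true` = pull arm `X`, `false` = pull arm `Y`).  Round `i ≥ 1` uses `ϑ i`. -/
abbrev Strat (Ω : Type*) (d : ℕ) := ℕ → Ω → Fin d → Bool

/-- The two-armed decision model: bounds `lo j < hi j`, enlargement parameter `δ > 0`,
a `Γ`-valued initial point `η`, and noise sequences `ξ, ξ'` with mean `0`, variance `σ²`,
bounded by `δ`, jointly independent across rounds and independent of `η`. -/
structure Model (Ω : Type*) [MeasurableSpace Ω] (P : Measure Ω) (d : ℕ) where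
  lo : Fin d → ℝ
  hi : Fin d → ℝ
  hlohi : ∀ j, lo j < hi j
  δ : ℝ
  hδ : 0 < δ
  σ : ℝ
  η : Ω → Fin d → ℝ
  hη : Measurable η
  hηΓ : ∀ ω, η ω ∈ Set.Icc lo hi
  ξ : ℕ → Ω → Fin d → ℝ
  ξ' : ℕ → Ω → Fin d → ℝ
  hξ : ∀ i, Measurable (ξ i)
  hξ' : ∀ i, Measurable (ξ' i)
  hξbdd : ∀ i j, ∀ᵐ ω ∂P, |ξ i ω j| ≤ δ
  hξ'bdd : ∀ i j, ∀ᵐ ω ∂P, |ξ' i ω j| ≤ δ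
  hξmean : ∀ i j, ∫ ω, ξ i ω j ∂P = 0
  hξ'mean : ∀ i j, ∫ ω, ξ' i ω j ∂P = 0
  hξvar : ∀ i j, ∫ ω, ξ i ω j ^ 2 ∂P = σ ^ 2
  hξ'var : ∀ i j, ∫ ω, ξ' i ω j ^ 2 ∂P = σ ^ 2
  indep : iIndepFun
      (fun i (ω : Ω) => if i = 0 then (η ω, η ω) else (ξ i ω, ξ' i ω)) P

namespace Model

variable {Ω : Type*} [MeasurableSpace Ω] {P : Measure Ω} {d : ℕ}

/-- The rectangular domain `Γ = ∏_j [lo j, hi j]`. -/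
def Γ (M : Model Ω P d) : Set (Fin d → ℝ) := Set.Icc M.lo M.hi

/-- The enlarged domain `Γ_δ = ∏_j [lo j − δ, hi j + δ]`. -/
def Γδ (M : Model Ω P d) : Set (Fin d → ℝ) :=
  Set.Icc (fun j => M.lo j - M.δ) (fun j => M.hi j + M.δ)

/-- Round-`i` reward vector under strategy `ϑ`:
`Z_{i,j} = ϑ_{i,j} X_{i,j} + (1 − ϑ_{i,j}) Y_{i,j}` where `X_{i,j} = hi j + ξ_{i,j}`,
`Y_{i,j} = lo j + ξ'_{i,j}`. -/
def Z (M : Model Ω P d) (ϑ : Strat Ω d) (i : ℕ) (ω : Ω) : Fin d → ℝ :=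
  fun j => if ϑ i ω j then M.hi j + M.ξ i ω j else M.lo j + M.ξ' i ω j

/-- Partial sums `S_n = η + ∑_{i=1}^n Z_i` (so `S_0 = η`). -/
def S (M : Model Ω P d) (ϑ : Strat Ω d) (n : ℕ) (ω : Ω) : Fin d → ℝ :=
  M.η ω + ∑ i ∈ Finset.Icc 1 n, M.Z ϑ i ω

/-- The sample mean `S_n/n`, with the convention `S_0/0 := η`. -/
def avg (M : Model Ω P d) (ϑ : Strat Ω d) (n : ℕ) (ω : Ω) : Fin d → ℝ :=
  if n = 0 then M.η ω else (n : ℝ)⁻¹ • M.S ϑ n ω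

/-- The history σ-algebra `𝓗_n^θ = σ(η, Z_1,…,Z_n, ϑ_1,…,ϑ_n)` (for `n = 0`: `σ(η)`). -/
def hist (M : Model Ω P d) (ϑ : Strat Ω d) (n : ℕ) : MeasurableSpace Ω :=
  MeasurableSpace.comap M.η inferInstance ⊔
    ⨆ i ∈ Finset.Icc 1 n,
      (MeasurableSpace.comap (M.Z ϑ i) inferInstance ⊔
        MeasurableSpace.comap (ϑ i) inferInstance)

/-- Admissibility: `ϑ_n` is `𝓗_{n−1}^θ`-measurable for every `n ≥ 1`. -/
def Admissible (M : Model Ω P d) (ϑ : Strat Ω d) : Prop :=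
  ∀ n, 1 ≤ n → Measurable[M.hist ϑ (n - 1)] (ϑ n)

/-- The sign-based strategy `θ*` associated with a function `g`: at round `m`, pull arm `j`'s
upper arm iff `∂g/∂x_j (S_{m−1}/(m−1)) ≥ 0` (with the convention `S_0/0 := η`). -/
def SignStrategy (M : Model Ω P d) (g : (Fin d → ℝ) → ℝ) (ϑ : Strat Ω d) : Prop :=
  M.Admissible ϑ ∧
    ∀ m, 1 ≤ m → ∀ ω j,
      (ϑ m ω j = true ↔ 0 ≤ fderiv ℝ g (M.avg ϑ (m - 1) ω) (Pi.single j 1))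

/-- The coordinatewise multimodal structure of Theorem 4 / Lemma SI-A.4: in coordinate `k`
there are peak locations `c_k^1 < ⋯ < c_k^{K_k}` separated by points
`lo k − δ = b_k^0 < ⋯ < b_k^{K_k} = hi k + δ`, the map `t ↦ f(x[k ↦ t])` is strictly
increasing on `(b_k^{j−1}, c_k^j)` and strictly decreasing on `[c_k^j, b_k^j)`, and on
`Γ_δ` the sign of `∂f/∂x_k` is determined by the position of `x k` relative to `c_k^j`. -/
structure Multimodal (M : Model Ω P d) (f : (Fin d → ℝ) → ℝ)
    (K : Fin d → ℕ) (c b : Fin d → ℕ → ℝ) : Prop where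
  hK : ∀ k, 1 ≤ K k
  hc_lo : ∀ k, M.lo k ≤ c k 1
  hc_hi : ∀ k, c k (K k) ≤ M.hi k
  hc_mono : ∀ k, ∀ j, 1 ≤ j → j < K k → c k j < c k (j + 1)
  hb0 : ∀ k, b k 0 = M.lo k - M.δ
  hbK : ∀ k, b k (K k) = M.hi k + M.δ
  hb_mono : ∀ k, ∀ j, j < K k → b k j < b k (j + 1)
  hinter : ∀ k, ∀ j, 1 ≤ j → j ≤ K k → b k (j - 1) < c k j ∧ c k j < b k j
  hmono : ∀ k, ∀ j, 1 ≤ j → j ≤ K k → ∀ x ∈ M.Γδ,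
    StrictMonoOn (fun t => f (Function.update x k t)) (Set.Ioo (b k (j - 1)) (c k j))
  hanti : ∀ k, ∀ j, 1 ≤ j → j ≤ K k → ∀ x ∈ M.Γδ,
    StrictAntiOn (fun t => f (Function.update x k t)) (Set.Ico (c k j) (b k j))
  hsign : ∀ k, ∀ j, 1 ≤ j → j ≤ K k → ∀ x ∈ M.Γδ,
    b k (j - 1) < x k → x k ≤ b k j →
      (0 ≤ fderiv ℝ f x (Pi.single k 1) ↔ x k ≤ c k j)

/-- The unimodal structure of Theorem 6: the restriction of `f` to `Γ` has `x*` as its unique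
local maximum point, `f` is coordinatewise strictly increasing below `x_i*` and strictly
decreasing above it, and on `Γ_δ` the sign of `∂f/∂x_i` is determined by `x i ≤ x_i*`. -/
structure Unimodal (M : Model Ω P d) (f : (Fin d → ℝ) → ℝ) (xstar : Fin d → ℝ) : Prop where
  hxΓ : xstar ∈ M.Γ
  hmax : IsLocalMaxOn f M.Γ xstar
  huniq : ∀ y ∈ M.Γ, IsLocalMaxOn f M.Γ y → y = xstar
  hmono : ∀ i, ∀ x ∈ M.Γδ,
    StrictMonoOn (fun t => f (Function.update x i t)) (Set.Ioo (M.lo i - M.δ) (xstar i))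
  hanti : ∀ i, ∀ x ∈ M.Γδ,
    StrictAntiOn (fun t => f (Function.update x i t)) (Set.Ico (xstar i) (M.hi i + M.δ))
  hsign : ∀ i, ∀ x ∈ M.Γδ, (0 ≤ fderiv ℝ f x (Pi.single i 1) ↔ x i ≤ xstar i)

end Model


section Helpers
open Topology ENNReal
set_option maxHeartbeats 1000000

private lemma nat_sqrt_tendsto : Tendsto (fun n : ℕ => Nat.sqrt n) atTop atTop :=
  tendsto_atTop_atTop.2 fun b => ⟨b ^ 2, fun n hn => Nat.le_sqrt'.2 hn⟩

private lemma slln_aux {Ω : Type*} [MeasurableSpace Ω] {P : Measure Ω} [IsProbabilityMeasure P]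
    {δ : ℝ} (hδ : 0 < δ) (W : ℕ → Ω → ℝ)
    (hmeas : ∀ i, Measurable (W i))
    (hbdd : ∀ i, ∀ᵐ ω ∂P, |W i ω| ≤ δ)
    (hmean : ∀ i, ∫ ω, W i ω ∂P = 0)
    (hindep : ∀ i j, 1 ≤ i → 1 ≤ j → i ≠ j → IndepFun (W i) (W j) P) :
    ∀ᵐ ω ∂P, Tendsto (fun n : ℕ => (∑ i ∈ Finset.Icc 1 n, W i ω) / n) atTop (𝓝 0) := by
  set T : ℕ → Ω → ℝ := fun n => ∑ i ∈ Finset.Icc 1 n, W i with hT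
  have hmem : ∀ i, MemLp (W i) 2 P := fun i =>
    (memLp_top_of_bound (hmeas i).aestronglyMeasurable δ
      (by simpa [Real.norm_eq_abs] using hbdd i)).mono_exponent le_top
  have hvar : ∀ i, variance (W i) P ≤ δ ^ 2 := by
    intro i
    have hle : ∫ ω, (W i ^ 2) ω ∂P ≤ δ ^ 2 := by
      calc ∫ ω, (W i ^ 2) ω ∂P ≤ ∫ _ω, δ ^ 2 ∂P := by
            refine integral_mono_ae (hmem i).integrable_sq (integrable_const _) ?_
            filter_upwards [hbdd i] with ω hω
            simpa [sq_abs] using pow_le_pow_left₀ (abs_nonneg _) hω 2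
        _ = δ ^ 2 := by simp
    rw [variance_eq_sub (hmem i), hmean i]
    simpa using hle
  have hTmem : ∀ n, MemLp (T n) 2 P := fun n =>
    memLp_finsetSum' _ fun i _ => hmem i
  have hTmean : ∀ n, ∫ ω, T n ω ∂P = 0 := by
    intro n
    have : ∫ ω, T n ω ∂P = ∑ i ∈ Finset.Icc 1 n, ∫ ω, W i ω ∂P := by
      rw [hT]
      simp only [Finset.sum_apply]
      exact integral_finset_sum _ fun i _ => (hmem i).integrable one_le_two
    simp [this, hmean]
  have hTvar : ∀ n, variance (T n) P ≤ n * δ ^ 2 := by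
    intro n
    rw [hT, IndepFun.variance_sum (fun i _ => hmem i)
      (fun i hi j hj hij => hindep i j (Finset.mem_Icc.1 hi).1 (Finset.mem_Icc.1 hj).1 hij)]
    calc ∑ i ∈ Finset.Icc 1 n, variance (W i) P ≤ ∑ _i ∈ Finset.Icc 1 n, δ ^ 2 :=
          Finset.sum_le_sum fun i _ => hvar i
      _ = n * δ ^ 2 := by simp [Nat.card_Icc]
  -- Chebyshev along squares
  have key : ∀ ε : ℝ, 0 < ε → ∀ᵐ ω ∂P, ∀ᶠ k : ℕ in atTop, |T (k ^ 2) ω| < ε * (k:ℝ)^2 := by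
    intro ε hε
    set A : ℕ → Set Ω := fun m =>
      {ω | ε * ((m + 1 : ℕ) : ℝ) ^ 2 ≤ |T ((m + 1) ^ 2) ω|} with hA
    have hAbound : ∀ m, P (A m) ≤ ENNReal.ofReal (δ ^ 2 / ε ^ 2 * (1 / ((m+1:ℕ):ℝ) ^ 2)) := by
      intro m
      have hc : (0:ℝ) < ε * ((m + 1 : ℕ) : ℝ) ^ 2 := by positivity
      have := meas_ge_le_variance_div_sq (μ := P) (hTmem ((m+1)^2)) hc
      rw [hTmean] at this
      refine le_trans (le_of_eq ?_) (le_trans this (ENNReal.ofReal_le_ofReal ?_))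
      · congr 1
        ext ω
        simp [hA]
      · rw [div_le_iff₀ (by positivity)]
        calc variance (T ((m+1)^2)) P ≤ ((m+1)^2 : ℕ) * δ ^ 2 := hTvar _
          _ = δ ^ 2 / ε ^ 2 * (1 / ((m+1:ℕ):ℝ) ^ 2) * (ε * ((m+1:ℕ):ℝ) ^ 2) ^ 2 := by
              push_cast
              field_simp
  -- summability
    have hsum : (∑' m, P (A m)) ≠ ∞ := by
      refine ne_top_of_le_ne_top ?_ (ENNReal.tsum_le_tsum hAbound)
      have hsummable : Summable (fun m : ℕ => δ ^ 2 / ε ^ 2 * (1 / ((m+1:ℕ):ℝ) ^ 2)) := by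
        apply Summable.mul_left
        have := Real.summable_one_div_nat_pow.2 (le_refl 2)
        exact (summable_nat_add_iff 1).2 this
      rw [← ENNReal.ofReal_tsum_of_nonneg (fun m => by positivity) hsummable]
      exact ENNReal.ofReal_ne_top
    filter_upwards [ae_eventually_notMem hsum] with ω hω
    rw [eventually_atTop] at hω ⊢
    obtain ⟨N, hN⟩ := hω
    refine ⟨N + 1, fun k hk => ?_⟩
    have h1 : 1 ≤ k := le_trans (Nat.le_add_left 1 N) hk
    have := hN (k - 1) (by omega)
    simp only [hA, Set.mem_setOf_eq, not_le] at this
    have hk1 : k - 1 + 1 = k := by omega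
    rwa [hk1] at this
  -- a.s. convergence along squares
  have squares : ∀ᵐ ω ∂P, Tendsto (fun k : ℕ => T (k ^ 2) ω / (k:ℝ) ^ 2) atTop (𝓝 0) := by
    have : ∀ᵐ ω ∂P, ∀ q : ℕ, ∀ᶠ k : ℕ in atTop,
        |T (k ^ 2) ω| < (1 / (q + 1 : ℝ)) * (k:ℝ)^2 := by
      rw [ae_all_iff]
      intro q
      exact key _ (by positivity)
    filter_upwards [this] with ω hω
    rw [Metric.tendsto_atTop]
    intro ε hε
    obtain ⟨q, hq⟩ := exists_nat_one_div_lt hε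
    obtain ⟨N, hN⟩ := eventually_atTop.1 (hω q)
    refine ⟨max N 1, fun k hk => ?_⟩
    have hk1 : 1 ≤ k := le_trans (le_max_right N 1) hk
    have hkpos : (0:ℝ) < (k:ℝ)^2 := by positivity
    have := hN k (le_trans (le_max_left N 1) hk)
    rw [Real.dist_eq, sub_zero, abs_div, abs_of_pos hkpos, div_lt_iff₀ hkpos]
    calc |T (k^2) ω| < (1 / (q + 1 : ℝ)) * (k:ℝ)^2 := this
      _ ≤ ε * (k:ℝ)^2 := by nlinarith [hq.le]
  -- gap filling
  filter_upwards [squares, ae_all_iff.2 hbdd] with ω hsq hb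
  have habs : Tendsto (fun n : ℕ => |T n ω| / n) atTop (𝓝 0) := by
    have hub : Tendsto (fun n : ℕ =>
        |T ((Nat.sqrt n) ^ 2) ω| / ((Nat.sqrt n : ℝ)) ^ 2 + 2 * δ / (Nat.sqrt n)) atTop (𝓝 0) := by
      have h1 : Tendsto (fun n : ℕ => |T ((Nat.sqrt n) ^ 2) ω| / ((Nat.sqrt n : ℝ)) ^ 2)
          atTop (𝓝 0) := by
        have := ((hsq.comp nat_sqrt_tendsto).abs)
        simpa [Function.comp_def, abs_div, abs_pow, Nat.abs_cast] using this
      have h2 : Tendsto (fun n : ℕ => 2 * δ / (Nat.sqrt n : ℝ)) atTop (𝓝 0) :=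
        (tendsto_const_div_atTop_nhds_zero_nat (2*δ)).comp nat_sqrt_tendsto
      simpa using h1.add h2
    apply squeeze_zero' (Filter.Eventually.of_forall fun n => by positivity)
      ?_ hub
    rw [eventually_atTop]
    refine ⟨1, fun n hn => ?_⟩
    set k := Nat.sqrt n with hk
    have hk1 : 1 ≤ k := by
      rw [hk]; exact Nat.le_sqrt'.2 (by simpa using hn)
    have hlow : k ^ 2 ≤ n := Nat.sqrt_le' n
    have hhigh : n < (k + 1) ^ 2 := Nat.lt_succ_sqrt' n
    have hIoc : ∀ m : ℕ, Finset.Icc 1 m = Finset.Ioc 0 m := fun m => by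
      ext x; simp only [Finset.mem_Icc, Finset.mem_Ioc]; omega
    have hsplit : T n ω = T (k ^ 2) ω + ∑ i ∈ Finset.Ioc (k^2) n, W i ω := by
      rw [hT]
      simp only [Finset.sum_apply]
      rw [hIoc, hIoc]
      exact (Finset.sum_Ioc_consecutive (fun i => W i ω) (Nat.zero_le _) hlow).symm
    have hgap : |∑ i ∈ Finset.Ioc (k^2) n, W i ω| ≤ (n - k^2 : ℕ) * δ := by
      calc |∑ i ∈ Finset.Ioc (k^2) n, W i ω| ≤ ∑ i ∈ Finset.Ioc (k^2) n, |W i ω| :=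
            Finset.abs_sum_le_sum_abs _ _
        _ ≤ ∑ _i ∈ Finset.Ioc (k^2) n, δ := Finset.sum_le_sum fun i _ => hb i
        _ = (n - k^2 : ℕ) * δ := by simp [Nat.card_Ioc]
    have hkpos : (0:ℝ) < (k:ℝ)^2 := by positivity
    have hnpos : (0:ℝ) < (n:ℝ) := by positivity
    have hkn : ((k:ℝ))^2 ≤ (n:ℝ) := by exact_mod_cast hlow
    have hcount : ((n - k^2 : ℕ) : ℝ) ≤ 2 * k := by
      have hexp : (k+1)^2 = k^2 + 2*k + 1 := by ring
      have : n - k ^ 2 ≤ 2 * k := by omega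
      exact_mod_cast this
    rw [div_le_iff₀ hnpos]
    calc |T n ω| ≤ |T (k^2) ω| + (n - k^2 : ℕ) * δ := by
          rw [hsplit]; exact (abs_add_le _ _).trans (by gcongr)
      _ ≤ |T (k^2) ω| + 2 * k * δ := by nlinarith [hδ.le, hcount]
      _ ≤ (|T (k ^ 2) ω| / (k:ℝ) ^ 2 + 2 * δ / k) * n := by
          have hkr : (0:ℝ) < (k:ℝ) := by exact_mod_cast hk1
          have e1 : |T (k^2) ω| ≤ |T (k ^ 2) ω| / (k:ℝ) ^ 2 * n := by
            rw [div_mul_eq_mul_div, le_div_iff₀ hkpos]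
            nlinarith [abs_nonneg (T (k^2) ω)]
          have e2 : 2 * k * δ ≤ 2 * δ / k * n := by
            rw [div_mul_eq_mul_div, le_div_iff₀ hkr]
            nlinarith [hδ.le]
          nlinarith [e1, e2]
    -- done
  rw [tendsto_zero_iff_abs_tendsto_zero]
  have heq : (abs ∘ fun n : ℕ => (∑ i ∈ Finset.Icc 1 n, W i ω) / n)
      = fun n : ℕ => |T n ω| / |(n:ℝ)| := by
    funext n; simp [Function.comp_def, hT, abs_div]
  rw [heq]
  simpa [Nat.abs_cast] using habs

private lemma floor_indicator_sum {α : ℝ} (h0 : 0 ≤ α) (h1 : α ≤ 1) (n : ℕ) :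
    ∑ i ∈ Finset.Icc 1 n, (if ⌊α * (i:ℝ)⌋₊ ≠ ⌊α * ((i - 1 : ℕ) : ℝ)⌋₊ then (1:ℝ) else 0)
      = (⌊α * (n:ℝ)⌋₊ : ℝ) := by
  induction n with
  | zero => simp
  | succ n ih =>
    rw [Finset.sum_Icc_succ_top (Nat.one_le_iff_ne_zero.mpr (Nat.succ_ne_zero n)), ih]
    have hcast : ((n + 1 - 1 : ℕ) : ℝ) = (n : ℝ) := by simp
    have hmono : ⌊α * (n:ℝ)⌋₊ ≤ ⌊α * ((n+1 : ℕ):ℝ)⌋₊ := Nat.floor_mono (by push_cast; nlinarith)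
    have hstep : ⌊α * ((n+1 : ℕ) : ℝ)⌋₊ ≤ ⌊α * (n:ℝ)⌋₊ + 1 := by
      have hle : α * ((n+1:ℕ):ℝ) ≤ α * (n:ℝ) + 1 := by push_cast; nlinarith
      calc ⌊α * ((n+1:ℕ):ℝ)⌋₊ ≤ ⌊α * (n:ℝ) + 1⌋₊ := Nat.floor_mono hle
        _ = ⌊α * (n:ℝ)⌋₊ + 1 := Nat.floor_add_one (by positivity)
    have hcast2 : ((n + 1 : ℕ) : ℝ) = (n:ℝ) + 1 := by push_cast; ring
    rw [hcast2] at hmono hstep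
    rw [hcast, hcast2]
    by_cases h : ⌊α * ((n:ℝ) + 1)⌋₊ = ⌊α * (n:ℝ)⌋₊
    · simp [h]
    · have h2 : ⌊α * ((n:ℝ) + 1)⌋₊ = ⌊α * (n:ℝ)⌋₊ + 1 := by omega
      rw [h2]
      simp

private lemma prob_eq_one_of_ae {Ω : Type*} [MeasurableSpace Ω] {P : Measure Ω}
    [IsProbabilityMeasure P] {q : Ω → Prop} (h : ∀ᵐ ω ∂P, q ω) :
    P {ω | q ω} = 1 := by
  have h0 : P {ω | q ω}ᶜ = 0 := by
    rw [ae_iff] at h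
    simpa [Set.compl_setOf] using h
  refine le_antisymm prob_le_one ?_
  calc (1 : ℝ≥0∞) = P Set.univ := measure_univ.symm
    _ ≤ P {ω | q ω} + P {ω | q ω}ᶜ :=
        le_trans (le_of_eq (congrArg P (Set.union_compl_self _).symm))
          (measure_union_le _ _)
    _ = P {ω | q ω} := by rw [h0, add_zero]

end Helpers

open Topology ENNReal in
set_option maxHeartbeats 1000000 in
/-- Theorem 1, second claim, almost-sure attainment:
for every continuous `f`, `sup_{θ∈Θ} P(limsup_n f(S_n^θ/n) = max_Γ f) = 1`. -/
theorem almost_sure_attainment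
    {Ω : Type*} [MeasurableSpace Ω] {P : Measure Ω} [IsProbabilityMeasure P]
    (d : ℕ) (hd : 1 ≤ d) (M : Model Ω P d)
    (f : (Fin d → ℝ) → ℝ) (hf : Continuous f) :
    (⨆ ϑ : {ϑ : Strat Ω d // M.Admissible ϑ},
        P {ω | Filter.limsup (fun n : ℕ => f ((n : ℝ)⁻¹ • M.S ϑ.1 n ω)) atTop
            = sSup (f '' M.Γ)}) = 1 := by
  classical
  have hΓne : M.Γ.Nonempty := ⟨M.lo, le_refl _, fun j => (M.hlohi j).le⟩
  obtain ⟨xstar, hxΓ, hmax⟩ :=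
    (isCompact_Icc (a := M.lo) (b := M.hi)).exists_isMaxOn hΓne hf.continuousOn
  have hmax' : ∀ y ∈ M.Γ, f y ≤ f xstar := fun y hy => hmax hy
  have hsup : sSup (f '' M.Γ) = f xstar := by
    apply le_antisymm
    · exact csSup_le (hΓne.image f) (by rintro y ⟨x, hx, rfl⟩; exact hmax' x hx)
    · exact le_csSup ⟨f xstar, by rintro y ⟨x, hx, rfl⟩; exact hmax' x hx⟩ ⟨xstar, hxΓ, rfl⟩
  set α : Fin d → ℝ := fun j => (xstar j - M.lo j) / (M.hi j - M.lo j) with hαdef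
  have hd0 : ∀ j, 0 < M.hi j - M.lo j := fun j => sub_pos.2 (M.hlohi j)
  have hα0 : ∀ j, 0 ≤ α j := fun j => div_nonneg (sub_nonneg.2 (hxΓ.1 j)) (hd0 j).le
  have hα1 : ∀ j, α j ≤ 1 := fun j =>
    (div_le_one (hd0 j)).2 (by have := hxΓ.2 j; linarith)
  have hxrec : ∀ j, M.lo j + α j * (M.hi j - M.lo j) = xstar j := fun j => by
    show M.lo j + (xstar j - M.lo j) / (M.hi j - M.lo j) * (M.hi j - M.lo j) = xstar j
    rw [div_mul_cancel₀ _ (hd0 j).ne']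
    ring
  set cond : ℕ → Fin d → Prop :=
    fun i j => ⌊α j * (i : ℝ)⌋₊ ≠ ⌊α j * ((i - 1 : ℕ) : ℝ)⌋₊ with hconddef
  set ϑ : Strat Ω d := fun i _ j => decide (cond i j) with hϑdef
  have hadm : M.Admissible ϑ := fun n _ => measurable_const
  -- noise variables
  set W : Fin d → ℕ → Ω → ℝ :=
    fun j i ω => if cond i j then M.ξ i ω j else M.ξ' i ω j with hWdef
  have hWmeas : ∀ j i, Measurable (W j i) := by
    intro j i
    by_cases h : cond i j
    · simp only [hWdef, if_pos h]
      exact (measurable_pi_apply j).comp (M.hξ i)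
    · simp only [hWdef, if_neg h]
      exact (measurable_pi_apply j).comp (M.hξ' i)
  have hWbdd : ∀ j i, ∀ᵐ ω ∂P, |W j i ω| ≤ M.δ := by
    intro j i
    by_cases h : cond i j
    · simp only [hWdef, if_pos h]
      exact M.hξbdd i j
    · simp only [hWdef, if_neg h]
      exact M.hξ'bdd i j
  have hWmean : ∀ j i, ∫ ω, W j i ω ∂P = 0 := by
    intro j i
    by_cases h : cond i j
    · simp only [hWdef, if_pos h]
      exact M.hξmean i j
    · simp only [hWdef, if_neg h]
      exact M.hξ'mean i j
  have hWindep : ∀ j, ∀ i i', 1 ≤ i → 1 ≤ i' → i ≠ i' → IndepFun (W j i) (W j i') P := by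
    intro j i i' hi hi' hii'
    have base := M.indep.indepFun hii'
    set φ : ℕ → ((Fin d → ℝ) × (Fin d → ℝ)) → ℝ :=
      fun i p => if cond i j then p.1 j else p.2 j with hφdef
    have hφmeas : ∀ i, Measurable (φ i) := by
      intro i
      by_cases h : cond i j
      · simp only [hφdef, if_pos h]
        exact (measurable_pi_apply j).comp measurable_fst
      · simp only [hφdef, if_neg h]
        exact (measurable_pi_apply j).comp measurable_snd
    have hWeq : ∀ i, 1 ≤ i → W j i =
        (φ i) ∘ (fun ω : Ω => if i = 0 then (M.η ω, M.η ω) else (M.ξ i ω, M.ξ' i ω)) := by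
      intro i hi
      funext ω
      simp [hWdef, hφdef, Nat.one_le_iff_ne_zero.1 hi]
    rw [hWeq i hi, hWeq i' hi']
    exact base.comp (hφmeas i) (hφmeas i')
  -- per coordinate SLLN
  have hae : ∀ᵐ ω ∂P, ∀ j,
      Tendsto (fun n : ℕ => (∑ i ∈ Finset.Icc 1 n, W j i ω) / n) atTop (𝓝 0) := by
    rw [ae_all_iff]
    intro j
    exact slln_aux M.hδ (W j) (hWmeas j) (hWbdd j) (hWmean j) (hWindep j)
  -- decomposition of S
  have hS : ∀ n (ω : Ω) j, M.S ϑ n ω j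
      = M.η ω j + ((n : ℝ) * M.lo j + (⌊α j * (n:ℝ)⌋₊ : ℝ) * (M.hi j - M.lo j))
        + ∑ i ∈ Finset.Icc 1 n, W j i ω := by
    intro n ω j
    have hZ : ∀ i, M.Z ϑ i ω j
        = (M.lo j + (if cond i j then (1:ℝ) else 0) * (M.hi j - M.lo j)) + W j i ω := by
      intro i
      by_cases h : cond i j
      · have hb : ϑ i ω j = true := by simp only [hϑdef, decide_eq_true_eq]; exact h
        simp only [Model.Z, hb, if_true, hWdef, if_pos h]
        ring
      · have hb : ϑ i ω j = false := by simp only [hϑdef, decide_eq_false_iff_not]; exact h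
        simp only [Model.Z, hb, Bool.false_eq_true, if_false, hWdef, if_neg h]
        ring
    simp only [Model.S, Pi.add_apply, Finset.sum_apply]
    rw [Finset.sum_congr rfl (fun i _ => hZ i), Finset.sum_add_distrib,
      Finset.sum_add_distrib, ← Finset.sum_mul, floor_indicator_sum (hα0 j) (hα1 j) n]
    simp [Nat.card_Icc]
    ring
  -- almost sure convergence to xstar
  have haeconv : ∀ᵐ ω ∂P,
      Filter.limsup (fun n : ℕ => f ((n : ℝ)⁻¹ • M.S ϑ n ω)) atTop = sSup (f '' M.Γ) := by
    filter_upwards [hae] with ω hω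
    have hconv : Tendsto (fun n : ℕ => (n : ℝ)⁻¹ • M.S ϑ n ω) atTop (𝓝 xstar) := by
      rw [tendsto_pi_nhds]
      intro j
      have hfloor : Tendsto (fun n : ℕ => (⌊α j * (n:ℝ)⌋₊ : ℝ) / (n:ℝ)) atTop (𝓝 (α j)) :=
        (tendsto_nat_floor_mul_div_atTop (hα0 j)).comp tendsto_natCast_atTop_atTop
      have lim : Tendsto (fun n : ℕ => M.η ω j / n
          + (M.lo j + ((⌊α j * (n:ℝ)⌋₊ : ℝ) / n) * (M.hi j - M.lo j))
          + (∑ i ∈ Finset.Icc 1 n, W j i ω) / n) atTop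
          (𝓝 (0 + (M.lo j + α j * (M.hi j - M.lo j)) + 0)) := by
        refine Tendsto.add (Tendsto.add ?_ ?_) (hω j)
        · exact tendsto_const_div_atTop_nhds_zero_nat _
        · exact tendsto_const_nhds.add (hfloor.mul_const _)
      rw [show (0:ℝ) + (M.lo j + α j * (M.hi j - M.lo j)) + 0 = xstar j by
        rw [hxrec j]; ring] at lim
      refine lim.congr' ?_
      filter_upwards [eventually_ge_atTop 1] with n hn
      have hne : (n : ℝ) ≠ 0 := Nat.cast_ne_zero.2 (by omega)
      simp only [Pi.smul_apply, smul_eq_mul]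
      rw [hS n ω j]
      field_simp
    have := (hf.tendsto xstar).comp hconv
    rw [hsup]
    exact this.limsup_eq
  -- conclude
  apply le_antisymm (iSup_le fun _ => prob_le_one)
  calc (1 : ℝ≥0∞) = P {ω | Filter.limsup (fun n : ℕ => f ((n : ℝ)⁻¹ • M.S ϑ n ω)) atTop
        = sSup (f '' M.Γ)} := (prob_eq_one_of_ae haeconv).symm
    _ ≤ _ := le_iSup_of_le ⟨ϑ, hadm⟩ le_rfl

end SMCO
end
end

section
/- One-step dynamic-programming identity over strategies (key identity in the proof of Lemma SI-A.2): let H : ℝ^d → ℝ be bounded and continuously differentiable with bounded gradient ∇H. Then for all integers n ≥ 1 and 1 ≤ m ≤ n, sup_{θ∈Θ} E[ H(S_{m−1}^θ/n) + ∇H(S_{m−1}^θ/n) · (Z_m^θ/n) ] = sup_{θ∈Θ} E[ H(S_{m−1}^θ/n) + (1/n) max_{p∈Γ} ( ∇H(S_{m−1}^θ/n) · p ) ]. -/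
open MeasureTheory ProbabilityTheory Filter Set

noncomputable section

namespace SMCO

section Aux

variable {Ω : Type*} [MeasurableSpace Ω] {P : Measure Ω} {d : ℕ}

/-- The combined source random variables of the model. -/
abbrev Model.F (M : Model Ω P d) : ℕ → Ω → (Fin d → ℝ) × (Fin d → ℝ) :=
  fun i ω => if i = 0 then (M.η ω, M.η ω) else (M.ξ i ω, M.ξ' i ω)

lemma Model.measurable_F (M : Model Ω P d) (i : ℕ) : Measurable (M.F i) := by
  unfold Model.F
  rcases eq_or_ne i 0 with h | h
  · simp only [h, if_pos rfl]; exact M.hη.prodMk M.hη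
  · simp only [if_neg h]; exact (M.hξ i).prodMk (M.hξ' i)

/-- The σ-algebra generated by the sources with index `< m`. -/
def Model.Gle (M : Model Ω P d) (m : ℕ) : MeasurableSpace Ω :=
  ⨆ i ∈ {i : ℕ | i < m}, MeasurableSpace.comap (M.F i) inferInstance

lemma Model.comap_F_le_Gle (M : Model Ω P d) {i m : ℕ} (h : i < m) :
    MeasurableSpace.comap (M.F i) inferInstance ≤ M.Gle m :=
  le_biSup (fun i => MeasurableSpace.comap (M.F i) inferInstance) h

lemma Model.Gle_le (M : Model Ω P d) (m : ℕ) : M.Gle m ≤ ‹MeasurableSpace Ω› := by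
  refine iSup₂_le fun i _ => ?_
  exact (M.measurable_F i).comap_le

lemma Model.Gle_mono (M : Model Ω P d) {m m' : ℕ} (h : m ≤ m') : M.Gle m ≤ M.Gle m' := by
  exact biSup_mono fun i (hi : i < m) => lt_of_lt_of_le hi h

lemma Model.measurable_eta_Gle (M : Model Ω P d) {m : ℕ} (hm : 0 < m) :
    Measurable[M.Gle m] M.η := by
  have h0 : Measurable[MeasurableSpace.comap (M.F 0) inferInstance] (M.F 0) :=
    measurable_iff_comap_le.mpr le_rfl
  have : Measurable[MeasurableSpace.comap (M.F 0) inferInstance] M.η := by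
    have h1 := measurable_fst.comp h0
    have h2 : Prod.fst ∘ M.F 0 = M.η := by funext ω; simp [Model.F]
    rwa [h2] at h1
  exact this.mono (M.comap_F_le_Gle hm) le_rfl

lemma Model.measurable_xi_Gle (M : Model Ω P d) {i m : ℕ} (hi : 1 ≤ i) (him : i < m) :
    Measurable[M.Gle m] (M.ξ i) := by
  have h0 : Measurable[MeasurableSpace.comap (M.F i) inferInstance] (M.F i) :=
    measurable_iff_comap_le.mpr le_rfl
  have : Measurable[MeasurableSpace.comap (M.F i) inferInstance] (M.ξ i) := by
    have h1 := measurable_fst.comp h0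
    have h2 : Prod.fst ∘ M.F i = M.ξ i := by
      funext ω; simp [Model.F, Nat.one_le_iff_ne_zero.mp hi]
    rwa [h2] at h1
  exact this.mono (M.comap_F_le_Gle him) le_rfl

lemma Model.measurable_xi'_Gle (M : Model Ω P d) {i m : ℕ} (hi : 1 ≤ i) (him : i < m) :
    Measurable[M.Gle m] (M.ξ' i) := by
  have h0 : Measurable[MeasurableSpace.comap (M.F i) inferInstance] (M.F i) :=
    measurable_iff_comap_le.mpr le_rfl
  have : Measurable[MeasurableSpace.comap (M.F i) inferInstance] (M.ξ' i) := by
    have h1 := measurable_snd.comp h0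
    have h2 : Prod.snd ∘ M.F i = M.ξ' i := by
      funext ω; simp [Model.F, Nat.one_le_iff_ne_zero.mp hi]
    rwa [h2] at h1
  exact this.mono (M.comap_F_le_Gle him) le_rfl

lemma measurable_Z_aux {Ω' : Type*} [MeasurableSpace Ω'] {d : ℕ} (lo hi : Fin d → ℝ)
    {t : Ω' → Fin d → Bool} {a b : Ω' → Fin d → ℝ}
    (ht : Measurable t) (ha : Measurable a) (hb : Measurable b) :
    Measurable (fun ω j => if t ω j then hi j + a ω j else lo j + b ω j) := by
  refine measurable_pi_lambda _ fun j => ?_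
  have hs : MeasurableSet {ω | t ω j = true} :=
    ((measurable_pi_apply j).comp ht) (measurableSet_singleton true)
  exact Measurable.ite hs
    (measurable_const.add ((measurable_pi_apply j).comp ha))
    (measurable_const.add ((measurable_pi_apply j).comp hb))


/-- The history σ-algebra is contained in the σ-algebra of the sources up to that time. -/
lemma Model.hist_le_Gle (M : Model Ω P d) {ϑ : Strat Ω d} (hadm : M.Admissible ϑ) :
    ∀ k, M.hist ϑ k ≤ M.Gle (k + 1) := by
  intro k
  induction k using Nat.strong_induction_on with
  | _ k IH =>
    refine sup_le ?_ (iSup₂_le fun i hi => ?_)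
    · exact measurable_iff_comap_le.mp (M.measurable_eta_Gle (Nat.succ_pos k))
    · simp only [Finset.mem_Icc] at hi
      obtain ⟨hi1, hik⟩ := hi
      have hik1 : i < k + 1 := Nat.lt_succ_of_le hik
      have hϑi : Measurable[M.Gle (k+1)] (ϑ i) := by
        have h1 : MeasurableSpace.comap (ϑ i) inferInstance ≤ M.hist ϑ (i - 1) :=
          measurable_iff_comap_le.mp (hadm i hi1)
        have h2 : M.hist ϑ (i - 1) ≤ M.Gle (i - 1 + 1) := IH (i - 1) (by omega)
        refine measurable_iff_comap_le.mpr (h1.trans (h2.trans (M.Gle_mono (by omega))))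
      refine sup_le ?_ (measurable_iff_comap_le.mp hϑi)
      refine measurable_iff_comap_le.mp ?_
      exact @measurable_Z_aux Ω (M.Gle (k+1)) d M.lo M.hi _ _ _ hϑi
        (M.measurable_xi_Gle hi1 hik1) (M.measurable_xi'_Gle hi1 hik1)

lemma Model.hist_le_ambient (M : Model Ω P d) {ϑ : Strat Ω d} (hadm : M.Admissible ϑ) (k : ℕ) :
    M.hist ϑ k ≤ ‹MeasurableSpace Ω› :=
  (M.hist_le_Gle hadm k).trans (M.Gle_le (k + 1))

/-- Independence of the past from the round-`m` noise. -/
lemma Model.indep_Gle (M : Model Ω P d) (m : ℕ) :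
    Indep (M.Gle m) (MeasurableSpace.comap (M.F m) inferInstance) P := by
  have h := ProbabilityTheory.indep_biSup_compl
    (fun i => (M.measurable_F i).comap_le) M.indep.iIndep {i : ℕ | i < m}
  refine indep_of_indep_of_le_right h ?_
  exact le_biSup (fun i => MeasurableSpace.comap (M.F i) inferInstance)
    (by simp : m ∈ {i : ℕ | i < m}ᶜ)

end Aux
section Aux2

variable {Ω : Type*} [MeasurableSpace Ω] {P : Measure Ω} {d : ℕ}

lemma Model.measurable_eta_hist (M : Model Ω P d) (ϑ : Strat Ω d) (k : ℕ) :
    Measurable[M.hist ϑ k] M.η :=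
  measurable_iff_comap_le.mpr le_sup_left

lemma Model.measurable_Z_hist (M : Model Ω P d) (ϑ : Strat Ω d) {i k : ℕ}
    (hi : i ∈ Finset.Icc 1 k) : Measurable[M.hist ϑ k] (M.Z ϑ i) := by
  refine measurable_iff_comap_le.mpr (le_sup_of_le_right ?_)
  calc MeasurableSpace.comap (M.Z ϑ i) inferInstance
      ≤ MeasurableSpace.comap (M.Z ϑ i) inferInstance ⊔
        MeasurableSpace.comap (ϑ i) inferInstance := le_sup_left
    _ ≤ _ := le_biSup (fun i => MeasurableSpace.comap (M.Z ϑ i) inferInstance ⊔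
        MeasurableSpace.comap (ϑ i) inferInstance) hi

lemma Model.measurable_S_hist (M : Model Ω P d) (ϑ : Strat Ω d) (k : ℕ) :
    Measurable[M.hist ϑ k] (M.S ϑ k) := by
  have : M.S ϑ k = fun ω => M.η ω + ∑ i ∈ Finset.Icc 1 k, M.Z ϑ i ω := rfl
  rw [this]
  exact (M.measurable_eta_hist ϑ k).add
    (Finset.measurable_sum _ fun i hi => M.measurable_Z_hist ϑ hi)

lemma Model.measurable_xi_coord (M : Model Ω P d) {i : ℕ} (hi : 1 ≤ i) (j : Fin d) :
    Measurable[MeasurableSpace.comap (M.F i) inferInstance] (fun ω => M.ξ i ω j) := by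
  have h0 : Measurable[MeasurableSpace.comap (M.F i) inferInstance] (M.F i) :=
    measurable_iff_comap_le.mpr le_rfl
  have h1 := (measurable_pi_apply j).comp (measurable_fst.comp h0)
  have h2 : ((fun f => f j) ∘ Prod.fst ∘ M.F i) = fun ω => M.ξ i ω j := by
    funext ω; simp [Model.F, Nat.one_le_iff_ne_zero.mp hi]
  rwa [h2] at h1

lemma Model.measurable_xi'_coord (M : Model Ω P d) {i : ℕ} (hi : 1 ≤ i) (j : Fin d) :
    Measurable[MeasurableSpace.comap (M.F i) inferInstance] (fun ω => M.ξ' i ω j) := by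
  have h0 : Measurable[MeasurableSpace.comap (M.F i) inferInstance] (M.F i) :=
    measurable_iff_comap_le.mpr le_rfl
  have h1 := (measurable_pi_apply j).comp (measurable_snd.comp h0)
  have h2 : ((fun f => f j) ∘ Prod.snd ∘ M.F i) = fun ω => M.ξ' i ω j := by
    funext ω; simp [Model.F, Nat.one_le_iff_ne_zero.mp hi]
  rwa [h2] at h1

/-- Key zero-mean step: a bounded history-measurable factor times round-`m` noise
has zero expectation. -/
lemma Model.integral_mul_xi [IsProbabilityMeasure P] (M : Model Ω P d) {ϑ : Strat Ω d}
    (hadm : M.Admissible ϑ) {m : ℕ} (hm : 1 ≤ m) (j : Fin d) {f : Ω → ℝ}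
    (hf : Measurable[M.hist ϑ (m - 1)] f) :
    ∫ ω, f ω * M.ξ m ω j ∂P = 0 := by
  have hle : M.hist ϑ (m - 1) ≤ M.Gle m :=
    (M.hist_le_Gle hadm (m - 1)).trans (M.Gle_mono (by omega))
  have hg := M.measurable_xi_coord hm j
  have hindep : IndepFun f (fun ω => M.ξ m ω j) P := by
    rw [IndepFun_iff_Indep]
    refine indep_of_indep_of_le_left
      (indep_of_indep_of_le_right (M.indep_Gle m) (measurable_iff_comap_le.mp hg)) ?_
    exact (measurable_iff_comap_le.mp hf).trans hle
  have hfm : Measurable f := hf.mono (M.hist_le_ambient hadm (m - 1)) le_rfl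
  have hgm : Measurable (fun ω => M.ξ m ω j) := (measurable_pi_apply j).comp (M.hξ m)
  have := hindep.integral_mul_eq_mul_integral hfm.aestronglyMeasurable hgm.aestronglyMeasurable
  have heq : ∫ ω, f ω * M.ξ m ω j ∂P = (∫ ω, f ω ∂P) * ∫ ω, M.ξ m ω j ∂P := this
  rw [heq, M.hξmean m j, mul_zero]

lemma Model.integral_mul_xi' [IsProbabilityMeasure P] (M : Model Ω P d) {ϑ : Strat Ω d}
    (hadm : M.Admissible ϑ) {m : ℕ} (hm : 1 ≤ m) (j : Fin d) {f : Ω → ℝ}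
    (hf : Measurable[M.hist ϑ (m - 1)] f) :
    ∫ ω, f ω * M.ξ' m ω j ∂P = 0 := by
  have hle : M.hist ϑ (m - 1) ≤ M.Gle m :=
    (M.hist_le_Gle hadm (m - 1)).trans (M.Gle_mono (by omega))
  have hg := M.measurable_xi'_coord hm j
  have hindep : IndepFun f (fun ω => M.ξ' m ω j) P := by
    rw [IndepFun_iff_Indep]
    refine indep_of_indep_of_le_left
      (indep_of_indep_of_le_right (M.indep_Gle m) (measurable_iff_comap_le.mp hg)) ?_
    exact (measurable_iff_comap_le.mp hf).trans hle
  have hfm : Measurable f := hf.mono (M.hist_le_ambient hadm (m - 1)) le_rfl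
  have hgm : Measurable (fun ω => M.ξ' m ω j) := (measurable_pi_apply j).comp (M.hξ' m)
  have := hindep.integral_mul_eq_mul_integral hfm.aestronglyMeasurable hgm.aestronglyMeasurable
  have heq : ∫ ω, f ω * M.ξ' m ω j ∂P = (∫ ω, f ω ∂P) * ∫ ω, M.ξ' m ω j ∂P := this
  rw [heq, M.hξ'mean m j, mul_zero]

end Aux2
section Aux3

variable {d : ℕ}

lemma clm_apply_eq_sum (L : (Fin d → ℝ) →L[ℝ] ℝ) (v : Fin d → ℝ) :
    L v = ∑ j, v j * L (Pi.single j 1) := by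
  conv_lhs => rw [← Finset.univ_sum_single v, map_sum]
  refine Finset.sum_congr rfl fun j _ => ?_
  have h : Pi.single j (v j) = v j • (Pi.single j 1 : Fin d → ℝ) := by
    funext i
    rcases eq_or_ne i j with h | h <;> simp [Pi.single_apply, h]
  rw [h, _root_.map_smul, smul_eq_mul]

lemma norm_single_le_one (j : Fin d) : ‖(Pi.single j 1 : Fin d → ℝ)‖ ≤ 1 := by
  refine (pi_norm_le_iff_of_nonneg zero_le_one).mpr fun i => ?_
  rcases eq_or_ne i j with h | h <;> simp [Pi.single_apply, h]

lemma abs_clm_single_le (L : (Fin d → ℝ) →L[ℝ] ℝ) (j : Fin d) {CL : ℝ} (hL : ‖L‖ ≤ CL) :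
    |L (Pi.single j 1)| ≤ CL := by
  calc |L (Pi.single j 1)| ≤ ‖L‖ * ‖(Pi.single j 1 : Fin d → ℝ)‖ := L.le_opNorm _
    _ ≤ CL * 1 := by
        apply mul_le_mul hL (norm_single_le_one j) (norm_nonneg _) (le_trans (norm_nonneg _) hL)
    _ = CL := mul_one CL

variable {lo hi : Fin d → ℝ}

/-- The vertex of the box `Icc lo hi` selected by a Boolean vector. -/
lemma bool_vertex_mem (hlohi : ∀ j, lo j ≤ hi j) (b : Fin d → Bool) :
    (fun j => if b j then hi j else lo j) ∈ Set.Icc lo hi := by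
  constructor <;> intro j <;> by_cases h : b j = true <;>
    simp [h, hlohi j, le_refl]

/-- A linear functional on the box is maximized at the sign vertex. -/
lemma le_sign_vertex (L : (Fin d → ℝ) →L[ℝ] ℝ) {p : Fin d → ℝ} (hp : p ∈ Set.Icc lo hi) :
    L p ≤ L (fun j => if 0 ≤ L (Pi.single j 1) then hi j else lo j) := by
  rw [clm_apply_eq_sum, clm_apply_eq_sum]
  refine Finset.sum_le_sum fun j _ => ?_
  by_cases h : 0 ≤ L (Pi.single j 1)
  · simp only [h, if_pos]
    exact mul_le_mul_of_nonneg_right (hp.2 j) h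
  · simp only [h, if_neg, if_false]
    exact mul_le_mul_of_nonpos_right (hp.1 j) (le_of_not_ge h)

lemma sSup_image_box (hlohi : ∀ j, lo j ≤ hi j) (L : (Fin d → ℝ) →L[ℝ] ℝ) :
    sSup ((fun p => L p) '' Set.Icc lo hi)
      = L (fun j => if 0 ≤ L (Pi.single j 1) then hi j else lo j) := by
  have hlomem : lo ∈ Set.Icc lo hi := ⟨le_refl lo, fun j => hlohi j⟩
  have hqmem : (fun j => if 0 ≤ L (Pi.single j 1) then hi j else lo j) ∈ Set.Icc lo hi := by
    constructor <;> intro j <;> by_cases h : 0 ≤ L (Pi.single j 1) <;>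
      simp [h, hlohi j, le_refl]
  refine le_antisymm ?_ ?_
  · refine csSup_le ⟨L lo, Set.mem_image_of_mem _ hlomem⟩ ?_
    rintro x ⟨p, hp, rfl⟩
    exact le_sign_vertex L hp
  · refine le_csSup ⟨L (fun j => if 0 ≤ L (Pi.single j 1) then hi j else lo j), ?_⟩
      (Set.mem_image_of_mem _ hqmem)
    rintro x ⟨p, hp, rfl⟩
    exact le_sign_vertex L hp

end Aux3
section Aux4

variable {Ω : Type*} [MeasurableSpace Ω] {P : Measure Ω} {d : ℕ}

lemma Model.measurable_Z (M : Model Ω P d) {ϑ : Strat Ω d} (hadm : M.Admissible ϑ) {i : ℕ}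
    (hi : 1 ≤ i) : Measurable (M.Z ϑ i) := by
  have hϑ : Measurable (ϑ i) := (hadm i hi).mono (M.hist_le_ambient hadm (i - 1)) le_rfl
  exact measurable_Z_aux M.lo M.hi hϑ (M.hξ i) (M.hξ' i)

lemma Model.measurable_S (M : Model Ω P d) {ϑ : Strat Ω d} (hadm : M.Admissible ϑ) (k : ℕ) :
    Measurable (M.S ϑ k) :=
  (M.measurable_S_hist ϑ k).mono (M.hist_le_ambient hadm k) le_rfl

lemma Model.measurable_smulS_hist (M : Model Ω P d) (ϑ : Strat Ω d) (k : ℕ) (c : ℝ) :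
    Measurable[M.hist ϑ k] (fun ω => c • M.S ϑ k ω) :=
  (continuous_const_smul c).measurable.comp (M.measurable_S_hist ϑ k)

lemma Model.measurable_D_hist (M : Model Ω P d) (ϑ : Strat Ω d) (k : ℕ) (c : ℝ)
    {H : (Fin d → ℝ) → ℝ} (hH : ContDiff ℝ 1 H) (v : Fin d → ℝ) :
    Measurable[M.hist ϑ k] (fun ω => fderiv ℝ H (c • M.S ϑ k ω) v) := by
  have hcont : Continuous (fun y => fderiv ℝ H y v) :=
    isBoundedBilinearMap_apply.continuous.comp
      ((hH.continuous_fderiv one_ne_zero).prodMk continuous_const)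
  exact hcont.measurable.comp (M.measurable_smulS_hist ϑ k c)

/-- **Key identity**: replacing the noisy reward by its conditional mean. -/
lemma Model.integral_grad_Z [IsProbabilityMeasure P] (M : Model Ω P d) {ϑ : Strat Ω d}
    (hadm : M.Admissible ϑ) {m : ℕ} (hm : 1 ≤ m) (c : ℝ)
    {H : (Fin d → ℝ) → ℝ} (hH : ContDiff ℝ 1 H) {CL : ℝ}
    (hHg : ∀ x, ‖fderiv ℝ H x‖ ≤ CL) :
    ∫ ω, fderiv ℝ H (c • M.S ϑ (m - 1) ω) (M.Z ϑ m ω) ∂P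
      = ∫ ω, fderiv ℝ H (c • M.S ϑ (m - 1) ω)
          (fun j => if ϑ m ω j then M.hi j else M.lo j) ∂P := by
  have hCL0 : 0 ≤ CL := le_trans (norm_nonneg _) (hHg 0)
  set L : Ω → (Fin d → ℝ) →L[ℝ] ℝ := fun ω => fderiv ℝ H (c • M.S ϑ (m - 1) ω) with hLdef
  set q : Ω → Fin d → ℝ := fun ω j => if ϑ m ω j then M.hi j else M.lo j with hqdef
  -- measurability facts
  have hϑm : Measurable (ϑ m) := (hadm m hm).mono (M.hist_le_ambient hadm (m - 1)) le_rfl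
  have hDhist : ∀ j : Fin d, Measurable[M.hist ϑ (m - 1)] (fun ω => L ω (Pi.single j 1)) :=
    fun j => M.measurable_D_hist ϑ (m - 1) c hH _
  have hDj : ∀ j : Fin d, Measurable (fun ω => L ω (Pi.single j 1)) := fun j =>
    (hDhist j).mono (M.hist_le_ambient hadm (m - 1)) le_rfl
  have hDb : ∀ (j : Fin d) ω, |L ω (Pi.single j 1)| ≤ CL := fun j ω =>
    abs_clm_single_le (L ω) j (hHg _)
  have hsets : ∀ j, MeasurableSet {ω | ϑ m ω j = true} := fun j =>
    ((measurable_pi_apply j).comp hϑm) (measurableSet_singleton true)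
  have hsets' : ∀ j, MeasurableSet[M.hist ϑ (m - 1)] {ω | ϑ m ω j = true} := fun j =>
    ((measurable_pi_apply j).comp (hadm m hm)) (measurableSet_singleton true)
  have hLmeas : Measurable L :=
    (hH.continuous_fderiv one_ne_zero).measurable.comp
      ((M.measurable_smulS_hist ϑ (m - 1) c).mono (M.hist_le_ambient hadm (m - 1)) le_rfl)
  have hqmeas : Measurable q := by
    refine measurable_pi_lambda _ fun j => ?_
    exact Measurable.ite (hsets j) measurable_const measurable_const
  have happly : ∀ {u : Ω → Fin d → ℝ}, Measurable u → Measurable (fun ω => L ω (u ω)) := by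
    intro u hu
    exact isBoundedBilinearMap_apply.continuous.measurable.comp (hLmeas.prodMk hu)
  -- pointwise decomposition
  have hpt : ∀ ω, L ω (M.Z ϑ m ω)
      = L ω (q ω) + ∑ j, ((if ϑ m ω j then L ω (Pi.single j 1) else 0) * M.ξ m ω j
          + (if ϑ m ω j then 0 else L ω (Pi.single j 1)) * M.ξ' m ω j) := by
    intro ω
    rw [clm_apply_eq_sum (L ω) (M.Z ϑ m ω), clm_apply_eq_sum (L ω) (q ω),
      ← Finset.sum_add_distrib]
    refine Finset.sum_congr rfl fun j _ => ?_
    by_cases h : ϑ m ω j <;> simp [Model.Z, hqdef, h] <;> ring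
  -- integrability
  have hint1 : ∀ j : Fin d,
      Integrable (fun ω => (if ϑ m ω j then L ω (Pi.single j 1) else 0) * M.ξ m ω j) P := by
    intro j
    have hmeas : Measurable fun ω => (if ϑ m ω j then L ω (Pi.single j 1) else 0) * M.ξ m ω j :=
      (Measurable.ite (hsets j) (hDj j) measurable_const).mul
        ((measurable_pi_apply j).comp (M.hξ m))
    refine Integrable.mono' (integrable_const (CL * M.δ)) hmeas.aestronglyMeasurable ?_
    filter_upwards [M.hξbdd m j] with ω hω
    rw [Real.norm_eq_abs, abs_mul]
    refine mul_le_mul ?_ hω (abs_nonneg _) hCL0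
    by_cases h : ϑ m ω j <;> simp [h, hDb j ω, hCL0]
  have hint2 : ∀ j : Fin d,
      Integrable (fun ω => (if ϑ m ω j then 0 else L ω (Pi.single j 1)) * M.ξ' m ω j) P := by
    intro j
    have hmeas : Measurable fun ω => (if ϑ m ω j then 0 else L ω (Pi.single j 1)) * M.ξ' m ω j :=
      (Measurable.ite (hsets j) measurable_const (hDj j)).mul
        ((measurable_pi_apply j).comp (M.hξ' m))
    refine Integrable.mono' (integrable_const (CL * M.δ)) hmeas.aestronglyMeasurable ?_
    filter_upwards [M.hξ'bdd m j] with ω hω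
    rw [Real.norm_eq_abs, abs_mul]
    refine mul_le_mul ?_ hω (abs_nonneg _) hCL0
    by_cases h : ϑ m ω j <;> simp [h, hDb j ω, hCL0]
  have hintq : Integrable (fun ω => L ω (q ω)) P := by
    refine Integrable.mono' (integrable_const (∑ j : Fin d, (|M.hi j| + |M.lo j|) * CL))
      (happly hqmeas).aestronglyMeasurable (Filter.Eventually.of_forall fun ω => ?_)
    rw [Real.norm_eq_abs, clm_apply_eq_sum (L ω) (q ω)]
    refine le_trans (Finset.abs_sum_le_sum_abs _ _) (Finset.sum_le_sum fun j _ => ?_)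
    rw [abs_mul]
    refine mul_le_mul ?_ (hDb j ω) (abs_nonneg _) (by positivity)
    by_cases h : ϑ m ω j
    · simp only [hqdef, h, if_true]
      exact le_add_of_nonneg_right (abs_nonneg _)
    · simp only [hqdef, h, if_false]
      exact le_add_of_nonneg_left (abs_nonneg _)
  -- conclusion
  have hintsum : Integrable (fun ω => ∑ j : Fin d,
      ((if ϑ m ω j then L ω (Pi.single j 1) else 0) * M.ξ m ω j
        + (if ϑ m ω j then 0 else L ω (Pi.single j 1)) * M.ξ' m ω j)) P :=
    integrable_finset_sum _ fun j _ => (hint1 j).add (hint2 j)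
  have hadd : ∀ j : Fin d, Integrable (fun ω =>
      (if ϑ m ω j then L ω (Pi.single j 1) else 0) * M.ξ m ω j
        + (if ϑ m ω j then 0 else L ω (Pi.single j 1)) * M.ξ' m ω j) P :=
    fun j => (hint1 j).add (hint2 j)
  have h1 : ∀ j : Fin d,
      ∫ ω, (if ϑ m ω j then L ω (Pi.single j 1) else 0) * M.ξ m ω j ∂P = 0 := fun j =>
    M.integral_mul_xi hadm hm j (Measurable.ite (hsets' j) (hDhist j) measurable_const)
  have h2 : ∀ j : Fin d,
      ∫ ω, (if ϑ m ω j then 0 else L ω (Pi.single j 1)) * M.ξ' m ω j ∂P = 0 := fun j =>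
    M.integral_mul_xi' hadm hm j (Measurable.ite (hsets' j) measurable_const (hDhist j))
  calc ∫ ω, L ω (M.Z ϑ m ω) ∂P
      = ∫ ω, (L ω (q ω) + ∑ j : Fin d,
          ((if ϑ m ω j then L ω (Pi.single j 1) else 0) * M.ξ m ω j
            + (if ϑ m ω j then 0 else L ω (Pi.single j 1)) * M.ξ' m ω j)) ∂P :=
        integral_congr_ae (Filter.Eventually.of_forall hpt)
    _ = ∫ ω, L ω (q ω) ∂P + ∫ ω, (∑ j : Fin d,
          ((if ϑ m ω j then L ω (Pi.single j 1) else 0) * M.ξ m ω j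
            + (if ϑ m ω j then 0 else L ω (Pi.single j 1)) * M.ξ' m ω j)) ∂P :=
        integral_add hintq hintsum
    _ = ∫ ω, L ω (q ω) ∂P := by
        have hsum0 : ∫ ω, (∑ j : Fin d,
            ((if ϑ m ω j then L ω (Pi.single j 1) else 0) * M.ξ m ω j
              + (if ϑ m ω j then 0 else L ω (Pi.single j 1)) * M.ξ' m ω j)) ∂P = 0 := by
          rw [integral_finset_sum _ fun j _ => hadd j]
          refine Finset.sum_eq_zero fun j _ => ?_
          rw [integral_add (hint1 j) (hint2 j), h1 j, h2 j, add_zero]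
        rw [hsum0, add_zero]

end Aux4
section Aux5

variable {Ω : Type*} [MeasurableSpace Ω] {P : Measure Ω} {d : ℕ}

lemma abs_clm_apply_le (L : (Fin d → ℝ) →L[ℝ] ℝ) {CL : ℝ} (hL : ‖L‖ ≤ CL)
    (v : Fin d → ℝ) {Bd : Fin d → ℝ} (hv : ∀ j, |v j| ≤ Bd j) :
    |L v| ≤ ∑ j, Bd j * CL := by
  have hCL0 : 0 ≤ CL := le_trans (norm_nonneg _) hL
  rw [clm_apply_eq_sum]
  refine le_trans (Finset.abs_sum_le_sum_abs _ _) (Finset.sum_le_sum fun j _ => ?_)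
  rw [abs_mul]
  exact mul_le_mul (hv j) (abs_clm_single_le L j hL) (abs_nonneg _)
    (le_trans (abs_nonneg _) (hv j))

lemma measurable_sign_aux {Ω' : Type*} [MeasurableSpace Ω'] {d : ℕ} {g : Fin d → Ω' → ℝ}
    (hg : ∀ j, Measurable (g j)) :
    Measurable (fun ω (j : Fin d) => if 0 ≤ g j ω then true else false) := by
  refine measurable_pi_lambda _ fun j => ?_
  exact Measurable.ite (measurableSet_le measurable_const (hg j))
    measurable_const measurable_const

lemma Model.admissible_const (M : Model Ω P d) (b : Bool) :
    M.Admissible (fun _ _ _ => b) := fun n _ => measurable_const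

lemma Model.measurable_L (M : Model Ω P d) {ϑ : Strat Ω d} (hadm : M.Admissible ϑ) (k : ℕ)
    (c : ℝ) {H : (Fin d → ℝ) → ℝ} (hH : ContDiff ℝ 1 H) :
    Measurable (fun ω => fderiv ℝ H (c • M.S ϑ k ω)) :=
  (hH.continuous_fderiv one_ne_zero).measurable.comp
    ((M.measurable_smulS_hist ϑ k c).mono (M.hist_le_ambient hadm k) le_rfl)

lemma Model.integrable_grad_apply [IsProbabilityMeasure P] (M : Model Ω P d) {ϑ : Strat Ω d}
    (hadm : M.Admissible ϑ) (k : ℕ) (c : ℝ) {H : (Fin d → ℝ) → ℝ} (hH : ContDiff ℝ 1 H)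
    {CL : ℝ} (hCL : ∀ x, ‖fderiv ℝ H x‖ ≤ CL) {u : Ω → Fin d → ℝ} (hu : Measurable u)
    {Bd : Fin d → ℝ} (hub : ∀ᵐ ω ∂P, ∀ j, |u ω j| ≤ Bd j) :
    Integrable (fun ω => fderiv ℝ H (c • M.S ϑ k ω) (u ω)) P := by
  have hmeas : Measurable (fun ω => fderiv ℝ H (c • M.S ϑ k ω) (u ω)) :=
    isBoundedBilinearMap_apply.continuous.measurable.comp
      ((M.measurable_L hadm k c hH).prodMk hu)
  refine Integrable.mono' (integrable_const (∑ j, Bd j * CL)) hmeas.aestronglyMeasurable ?_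
  filter_upwards [hub] with ω hω
  rw [Real.norm_eq_abs]
  exact abs_clm_apply_le _ (hCL _) _ hω

/-- Bound on the integral of the gradient applied to a coordinatewise-bounded vector. -/
lemma Model.abs_integral_grad_apply_le [IsProbabilityMeasure P] (M : Model Ω P d)
    (k : ℕ) (c : ℝ) {H : (Fin d → ℝ) → ℝ} {ϑ : Strat Ω d}
    {CL : ℝ} (hCL : ∀ x, ‖fderiv ℝ H x‖ ≤ CL) {u : Ω → Fin d → ℝ}
    {Bd : Fin d → ℝ} (hub : ∀ᵐ ω ∂P, ∀ j, |u ω j| ≤ Bd j) :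
    |∫ ω, fderiv ℝ H (c • M.S ϑ k ω) (u ω) ∂P| ≤ ∑ j, Bd j * CL := by
  have := norm_integral_le_of_norm_le_const (μ := P)
    (f := fun ω => fderiv ℝ H (c • M.S ϑ k ω) (u ω)) (C := ∑ j, Bd j * CL) ?_
  · simpa using this
  · filter_upwards [hub] with ω hω
    rw [Real.norm_eq_abs]
    exact abs_clm_apply_le _ (hCL _) _ hω

end Aux5
section Aux6

variable {Ω : Type*} [MeasurableSpace Ω] {P : Measure Ω} {d : ℕ}

lemma Model.integrable_H [IsProbabilityMeasure P] (M : Model Ω P d) {ϑ : Strat Ω d}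
    (hadm : M.Admissible ϑ) (k : ℕ) (c : ℝ) {H : (Fin d → ℝ) → ℝ} (hH : ContDiff ℝ 1 H)
    {CH : ℝ} (hCH : ∀ x, |H x| ≤ CH) :
    Integrable (fun ω => H (c • M.S ϑ k ω)) P := by
  have hmeas : Measurable (fun ω => H (c • M.S ϑ k ω)) :=
    hH.continuous.measurable.comp
      ((M.measurable_smulS_hist ϑ k c).mono (M.hist_le_ambient hadm k) le_rfl)
  refine Integrable.mono' (integrable_const CH) hmeas.aestronglyMeasurable ?_
  exact Filter.Eventually.of_forall fun ω => by rw [Real.norm_eq_abs]; exact hCH _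

lemma Model.abs_integral_H_le [IsProbabilityMeasure P] (M : Model Ω P d) {ϑ : Strat Ω d}
    (k : ℕ) (c : ℝ) {H : (Fin d → ℝ) → ℝ} {CH : ℝ} (hCH : ∀ x, |H x| ≤ CH) :
    |∫ ω, H (c • M.S ϑ k ω) ∂P| ≤ CH := by
  have := norm_integral_le_of_norm_le_const (μ := P)
    (f := fun ω => H (c • M.S ϑ k ω)) (C := CH)
    (Filter.Eventually.of_forall fun ω => by rw [Real.norm_eq_abs]; exact hCH _)
  simpa using this

lemma Model.ae_Z_bound [IsProbabilityMeasure P] (M : Model Ω P d) (ϑ : Strat Ω d) (m : ℕ) :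
    ∀ᵐ ω ∂P, ∀ j, |M.Z ϑ m ω j| ≤ |M.hi j| + |M.lo j| + M.δ := by
  filter_upwards [ae_all_iff.mpr (M.hξbdd m), ae_all_iff.mpr (M.hξ'bdd m)] with ω h1 h2
  intro j
  have : M.Z ϑ m ω j = if ϑ m ω j then M.hi j + M.ξ m ω j else M.lo j + M.ξ' m ω j := rfl
  rw [this]
  by_cases h : ϑ m ω j
  · rw [if_pos h]
    calc |M.hi j + M.ξ m ω j| ≤ |M.hi j| + |M.ξ m ω j| := abs_add_le _ _
      _ ≤ |M.hi j| + |M.lo j| + M.δ := by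
          have := h1 j; have := abs_nonneg (M.lo j); linarith
  · rw [if_neg h]
    calc |M.lo j + M.ξ' m ω j| ≤ |M.lo j| + |M.ξ' m ω j| := abs_add_le _ _
      _ ≤ |M.hi j| + |M.lo j| + M.δ := by
          have := h2 j; have := abs_nonneg (M.hi j); linarith

lemma Model.A_eq [IsProbabilityMeasure P] (M : Model Ω P d) {ϑ : Strat Ω d}
    (hadm : M.Admissible ϑ) {m : ℕ} (hm : 1 ≤ m) {c : ℝ} (hc0 : 0 ≤ c) (hc1 : c ≤ 1)
    {H : (Fin d → ℝ) → ℝ} (hH : ContDiff ℝ 1 H) {CH : ℝ} (hCH : ∀ x, |H x| ≤ CH)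
    {CL : ℝ} (hCL : ∀ x, ‖fderiv ℝ H x‖ ≤ CL) :
    ∫ ω, (H (c • M.S ϑ (m - 1) ω)
        + fderiv ℝ H (c • M.S ϑ (m - 1) ω) (c • M.Z ϑ m ω)) ∂P
      = (∫ ω, H (c • M.S ϑ (m - 1) ω) ∂P)
        + c * ∫ ω, fderiv ℝ H (c • M.S ϑ (m - 1) ω)
            (fun j => if ϑ m ω j then M.hi j else M.lo j) ∂P := by
  have hZmeas : Measurable (fun ω => c • M.Z ϑ m ω) :=
    (continuous_const_smul c).measurable.comp (M.measurable_Z hadm hm)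
  have hub : ∀ᵐ ω ∂P, ∀ j, |(c • M.Z ϑ m ω) j| ≤ |M.hi j| + |M.lo j| + M.δ := by
    filter_upwards [M.ae_Z_bound ϑ m] with ω hω j
    have : |(c • M.Z ϑ m ω) j| = |c| * |M.Z ϑ m ω j| := by
      rw [Pi.smul_apply, smul_eq_mul, abs_mul]
    rw [this]
    calc |c| * |M.Z ϑ m ω j| ≤ 1 * |M.Z ϑ m ω j| := by
          refine mul_le_mul_of_nonneg_right ?_ (abs_nonneg _)
          rw [abs_of_nonneg hc0]; exact hc1
      _ = |M.Z ϑ m ω j| := one_mul _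
      _ ≤ _ := hω j
  have hintZ : Integrable
      (fun ω => fderiv ℝ H (c • M.S ϑ (m - 1) ω) (c • M.Z ϑ m ω)) P :=
    M.integrable_grad_apply hadm (m - 1) c hH hCL hZmeas hub
  rw [integral_add (M.integrable_H hadm (m - 1) c hH hCH) hintZ]
  congr 1
  calc ∫ ω, fderiv ℝ H (c • M.S ϑ (m - 1) ω) (c • M.Z ϑ m ω) ∂P
      = ∫ ω, c * fderiv ℝ H (c • M.S ϑ (m - 1) ω) (M.Z ϑ m ω) ∂P := by
        refine integral_congr_ae (Filter.Eventually.of_forall fun ω => ?_)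
        simp only [ContinuousLinearMap.map_smul, smul_eq_mul]
    _ = c * ∫ ω, fderiv ℝ H (c • M.S ϑ (m - 1) ω) (M.Z ϑ m ω) ∂P := by
        rw [integral_const_mul]
    _ = c * ∫ ω, fderiv ℝ H (c • M.S ϑ (m - 1) ω)
            (fun j => if ϑ m ω j then M.hi j else M.lo j) ∂P := by
        rw [M.integral_grad_Z hadm hm c hH hCL]

lemma Model.B_eq [IsProbabilityMeasure P] (M : Model Ω P d) {ϑ : Strat Ω d}
    (hadm : M.Admissible ϑ) (k : ℕ) {c : ℝ}
    {H : (Fin d → ℝ) → ℝ} (hH : ContDiff ℝ 1 H) {CH : ℝ} (hCH : ∀ x, |H x| ≤ CH)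
    {CL : ℝ} (hCL : ∀ x, ‖fderiv ℝ H x‖ ≤ CL) :
    ∫ ω, (H (c • M.S ϑ k ω)
        + c * sSup ((fun p => fderiv ℝ H (c • M.S ϑ k ω) p) '' M.Γ)) ∂P
      = (∫ ω, H (c • M.S ϑ k ω) ∂P)
        + c * ∫ ω, fderiv ℝ H (c • M.S ϑ k ω)
            (fun j => if 0 ≤ fderiv ℝ H (c • M.S ϑ k ω) (Pi.single j 1)
              then M.hi j else M.lo j) ∂P := by
  have hrw : ∀ ω, sSup ((fun p => fderiv ℝ H (c • M.S ϑ k ω) p) '' M.Γ)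
      = fderiv ℝ H (c • M.S ϑ k ω)
          (fun j => if 0 ≤ fderiv ℝ H (c • M.S ϑ k ω) (Pi.single j 1)
            then M.hi j else M.lo j) := fun ω =>
    sSup_image_box (fun j => (M.hlohi j).le) (fderiv ℝ H (c • M.S ϑ k ω))
  have hqmeas : Measurable (fun ω (j : Fin d) =>
      if 0 ≤ fderiv ℝ H (c • M.S ϑ k ω) (Pi.single j 1) then M.hi j else M.lo j) := by
    refine measurable_pi_lambda _ fun j => ?_
    have hD : Measurable (fun ω => fderiv ℝ H (c • M.S ϑ k ω) (Pi.single j 1)) :=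
      (M.measurable_D_hist ϑ k c hH _).mono (M.hist_le_ambient hadm k) le_rfl
    exact Measurable.ite (measurableSet_le measurable_const hD)
      measurable_const measurable_const
  have hub : ∀ᵐ ω ∂P, ∀ j, |(fun j : Fin d =>
      if 0 ≤ fderiv ℝ H (c • M.S ϑ k ω) (Pi.single j 1) then M.hi j else M.lo j) j|
        ≤ |M.hi j| + |M.lo j| + M.δ := by
    refine Filter.Eventually.of_forall fun ω j => ?_
    have hδ := M.hδ.le
    by_cases h : 0 ≤ fderiv ℝ H (c • M.S ϑ k ω) (Pi.single j 1)
    · simp only [h, if_true]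
      have := abs_nonneg (M.lo j); linarith
    · simp only [h, if_false]
      have := abs_nonneg (M.hi j); linarith
  have hintq : Integrable (fun ω => fderiv ℝ H (c • M.S ϑ k ω)
      (fun j => if 0 ≤ fderiv ℝ H (c • M.S ϑ k ω) (Pi.single j 1)
        then M.hi j else M.lo j)) P :=
    M.integrable_grad_apply hadm k c hH hCL hqmeas hub
  calc ∫ ω, (H (c • M.S ϑ k ω)
        + c * sSup ((fun p => fderiv ℝ H (c • M.S ϑ k ω) p) '' M.Γ)) ∂P
      = ∫ ω, (H (c • M.S ϑ k ω) + c * fderiv ℝ H (c • M.S ϑ k ω)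
          (fun j => if 0 ≤ fderiv ℝ H (c • M.S ϑ k ω) (Pi.single j 1)
            then M.hi j else M.lo j)) ∂P := by
        refine integral_congr_ae (Filter.Eventually.of_forall fun ω => ?_)
        simp only [hrw]
    _ = _ := by
        rw [integral_add (M.integrable_H hadm k c hH hCH) (hintq.const_mul c),
          integral_const_mul]

end Aux6

/-- key identity in the proof of Lemma SI-A.2, one-step dynamic programming
over strategies: for bounded `C¹` `H` with bounded gradient and `1 ≤ m ≤ n`,
`sup_θ E[H(S_{m−1}^θ/n) + ∇H(S_{m−1}^θ/n)·(Z_m^θ/n)]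
  = sup_θ E[H(S_{m−1}^θ/n) + (1/n) max_{p∈Γ} ∇H(S_{m−1}^θ/n)·p]`. -/
theorem one_step_dynamic_programming
    {Ω : Type*} [MeasurableSpace Ω] {P : Measure Ω} [IsProbabilityMeasure P]
    (d : ℕ) (hd : 1 ≤ d) (M : Model Ω P d)
    (H : (Fin d → ℝ) → ℝ) (hH : ContDiff ℝ 1 H)
    (hHb : ∃ C, ∀ x, |H x| ≤ C) (hHg : ∃ C, ∀ x, ‖fderiv ℝ H x‖ ≤ C)
    (n m : ℕ) (hm1 : 1 ≤ m) (hmn : m ≤ n) :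
    (⨆ ϑ : {ϑ : Strat Ω d // M.Admissible ϑ},
        ∫ ω, (H ((n : ℝ)⁻¹ • M.S ϑ.1 (m - 1) ω)
          + fderiv ℝ H ((n : ℝ)⁻¹ • M.S ϑ.1 (m - 1) ω) ((n : ℝ)⁻¹ • M.Z ϑ.1 m ω)) ∂P)
      = ⨆ ϑ : {ϑ : Strat Ω d // M.Admissible ϑ},
          ∫ ω, (H ((n : ℝ)⁻¹ • M.S ϑ.1 (m - 1) ω)
            + (n : ℝ)⁻¹ *
              sSup ((fun p => fderiv ℝ H ((n : ℝ)⁻¹ • M.S ϑ.1 (m - 1) ω) p) '' M.Γ)) ∂P := by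
  obtain ⟨CH, hCH⟩ := hHb
  obtain ⟨CL, hCL⟩ := hHg
  set c : ℝ := ((n : ℝ))⁻¹ with hc
  have hc0 : 0 ≤ c := inv_nonneg.mpr (Nat.cast_nonneg n)
  have hn1 : (1 : ℝ) ≤ (n : ℝ) := by exact_mod_cast le_trans hm1 hmn
  have hc1 : c ≤ 1 := inv_le_one_of_one_le₀ hn1
  set R : ℝ := ∑ j : Fin d, (|M.hi j| + |M.lo j| + M.δ) * CL with hR
  haveI : Nonempty {ϑ : Strat Ω d // M.Admissible ϑ} :=
    ⟨⟨fun _ _ _ => true, M.admissible_const true⟩⟩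
  -- generic bound
  have hABle : ∀ (ϑ : Strat Ω d), ∀ I : ℝ, |I| ≤ R →
      (∫ ω, H (c • M.S ϑ (m - 1) ω) ∂P) + c * I ≤ CH + R := by
    intro ϑ I hI
    refine add_le_add (le_trans (le_abs_self _) (M.abs_integral_H_le (m - 1) c hCH)) ?_
    calc c * I ≤ |c * I| := le_abs_self _
      _ = |c| * |I| := abs_mul _ _
      _ ≤ 1 * R := mul_le_mul (by rw [abs_of_nonneg hc0]; exact hc1) hI (abs_nonneg _)
          zero_le_one
      _ = R := one_mul _
  -- a.e. coordinate bounds for the two vertex selections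
  have hub_q : ∀ (ϑ : Strat Ω d), ∀ᵐ ω ∂P, ∀ j : Fin d,
      |(fun j => if ϑ m ω j then M.hi j else M.lo j) j| ≤ |M.hi j| + |M.lo j| + M.δ := by
    intro ϑ
    refine Filter.Eventually.of_forall fun ω j => ?_
    have hδ := M.hδ.le
    show |(if ϑ m ω j = true then M.hi j else M.lo j : ℝ)| ≤ |M.hi j| + |M.lo j| + M.δ
    by_cases h : ϑ m ω j
    · rw [if_pos h]; have := abs_nonneg (M.lo j); linarith
    · rw [if_neg h]; have := abs_nonneg (M.hi j); linarith
  have hub_s : ∀ (ϑ : Strat Ω d), ∀ᵐ ω ∂P, ∀ j : Fin d,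
      |(fun j => if 0 ≤ fderiv ℝ H (c • M.S ϑ (m - 1) ω) (Pi.single j 1)
          then M.hi j else M.lo j) j| ≤ |M.hi j| + |M.lo j| + M.δ := by
    intro ϑ
    refine Filter.Eventually.of_forall fun ω j => ?_
    have hδ := M.hδ.le
    show |(if 0 ≤ fderiv ℝ H (c • M.S ϑ (m - 1) ω) (Pi.single j 1) then M.hi j else M.lo j : ℝ)|
      ≤ |M.hi j| + |M.lo j| + M.δ
    by_cases h : 0 ≤ fderiv ℝ H (c • M.S ϑ (m - 1) ω) (Pi.single j 1)
    · rw [if_pos h]; have := abs_nonneg (M.lo j); linarith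
    · rw [if_neg h]; have := abs_nonneg (M.hi j); linarith
  -- integrability of the two replaced integrands
  have hint_q : ∀ (ϑ : Strat Ω d), M.Admissible ϑ → Integrable (fun ω =>
      fderiv ℝ H (c • M.S ϑ (m - 1) ω)
        (fun j => if ϑ m ω j then M.hi j else M.lo j)) P := by
    intro ϑ hadm
    have hϑm : Measurable (ϑ m) :=
      (hadm m hm1).mono (M.hist_le_ambient hadm (m - 1)) le_rfl
    have hmeas : Measurable (fun ω (j : Fin d) =>
        if ϑ m ω j then M.hi j else M.lo j) := by
      refine measurable_pi_lambda _ fun j => ?_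
      exact Measurable.ite (((measurable_pi_apply j).comp hϑm)
        (measurableSet_singleton true)) measurable_const measurable_const
    exact M.integrable_grad_apply hadm (m - 1) c hH hCL hmeas (hub_q ϑ)
  have hint_s : ∀ (ϑ : Strat Ω d), M.Admissible ϑ → Integrable (fun ω =>
      fderiv ℝ H (c • M.S ϑ (m - 1) ω)
        (fun j => if 0 ≤ fderiv ℝ H (c • M.S ϑ (m - 1) ω) (Pi.single j 1)
          then M.hi j else M.lo j)) P := by
    intro ϑ hadm
    have hmeas : Measurable (fun ω (j : Fin d) =>
        if 0 ≤ fderiv ℝ H (c • M.S ϑ (m - 1) ω) (Pi.single j 1)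
          then M.hi j else M.lo j) := by
      refine measurable_pi_lambda _ fun j => ?_
      have hD : Measurable (fun ω => fderiv ℝ H (c • M.S ϑ (m - 1) ω) (Pi.single j 1)) :=
        (M.measurable_D_hist ϑ (m - 1) c hH _).mono (M.hist_le_ambient hadm (m - 1)) le_rfl
      exact Measurable.ite (measurableSet_le measurable_const hD)
        measurable_const measurable_const
    exact M.integrable_grad_apply hadm (m - 1) c hH hCL hmeas (hub_s ϑ)
  -- the two suprema are bounded above
  have hbddA : BddAbove (Set.range fun ϑ : {ϑ : Strat Ω d // M.Admissible ϑ} =>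
      ∫ ω, (H (c • M.S ϑ.1 (m - 1) ω)
        + fderiv ℝ H (c • M.S ϑ.1 (m - 1) ω) (c • M.Z ϑ.1 m ω)) ∂P) := by
    refine ⟨CH + R, ?_⟩
    rintro x ⟨ϑ, rfl⟩
    simp only []
    rw [M.A_eq ϑ.2 hm1 hc0 hc1 hH hCH hCL]
    exact hABle ϑ.1 _ (M.abs_integral_grad_apply_le (m - 1) c hCL (hub_q ϑ.1))
  have hbddB : BddAbove (Set.range fun ϑ : {ϑ : Strat Ω d // M.Admissible ϑ} =>
      ∫ ω, (H (c • M.S ϑ.1 (m - 1) ω)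
        + c * sSup ((fun p => fderiv ℝ H (c • M.S ϑ.1 (m - 1) ω) p) '' M.Γ)) ∂P) := by
    refine ⟨CH + R, ?_⟩
    rintro x ⟨ϑ, rfl⟩
    simp only []
    rw [M.B_eq ϑ.2 (m - 1) hH hCH hCL]
    exact hABle ϑ.1 _ (M.abs_integral_grad_apply_le (m - 1) c hCL (hub_s ϑ.1))
  refine le_antisymm (ciSup_le fun ϑ => ?_) (ciSup_le fun ϑ => ?_)
  · -- A ϑ ≤ B ϑ ≤ sup B
    refine le_trans ?_ (le_ciSup hbddB ϑ)
    rw [M.A_eq ϑ.2 hm1 hc0 hc1 hH hCH hCL, M.B_eq ϑ.2 (m - 1) hH hCH hCL]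
    refine add_le_add_right (mul_le_mul_of_nonneg_left ?_ hc0) _
    refine integral_mono (hint_q ϑ.1 ϑ.2) (hint_s ϑ.1 ϑ.2) fun ω => ?_
    exact le_sign_vertex _ (bool_vertex_mem (fun j => (M.hlohi j).le) (ϑ.1 m ω))
  · -- B ϑ = A ϑ' ≤ sup A
    set ϑ' : Strat Ω d := fun i => if i < m then ϑ.1 i else if i = m
        then (fun ω j => if 0 ≤ fderiv ℝ H (c • M.S ϑ.1 (m - 1) ω) (Pi.single j 1)
          then true else false)
        else fun _ _ => true with hϑ'
    have hϑ'lt : ∀ i, i < m → ϑ' i = ϑ.1 i := by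
      intro i hi; rw [hϑ']; simp [hi]
    have hϑ'm : ϑ' m = fun ω j =>
        if 0 ≤ fderiv ℝ H (c • M.S ϑ.1 (m - 1) ω) (Pi.single j 1) then true else false := by
      rw [hϑ']; simp
    have hZeq : ∀ i, i < m → M.Z ϑ' i = M.Z ϑ.1 i := by
      intro i hi; funext ω j
      simp only [Model.Z, hϑ'lt i hi]
    have hSeq : ∀ k, k < m → M.S ϑ' k = M.S ϑ.1 k := by
      intro k hk; funext ω
      simp only [Model.S]
      congr 1
      refine Finset.sum_congr rfl fun i hi => ?_
      rw [hZeq i (lt_of_le_of_lt (Finset.mem_Icc.mp hi).2 hk)]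
    have hhist : ∀ k, k < m → M.hist ϑ' k = M.hist ϑ.1 k := by
      intro k hk
      simp only [Model.hist]
      congr 1
      refine biSup_congr fun i hi => ?_
      rw [hZeq i (lt_of_le_of_lt (Finset.mem_Icc.mp hi).2 hk),
        hϑ'lt i (lt_of_le_of_lt (Finset.mem_Icc.mp hi).2 hk)]
    have hadm' : M.Admissible ϑ' := by
      intro i hi1
      rcases lt_trichotomy i m with h | h | h
      · rw [hϑ'lt i h, hhist (i - 1) (by omega)]
        exact ϑ.2 i hi1
      · subst h
        rw [hϑ'm, hhist (i - 1) (by omega)]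
        exact @measurable_sign_aux Ω (M.hist ϑ.1 (i - 1)) d _
          (fun j => M.measurable_D_hist ϑ.1 (i - 1) c hH (Pi.single j 1))
      · have he : ϑ' i = fun _ _ => true := by
          simp only [hϑ', if_neg (show ¬ i < m by omega), if_neg (show ¬ i = m by omega)]
        rw [he]
        exact measurable_const
    have hkey : ∫ ω, (H (c • M.S ϑ.1 (m - 1) ω)
          + c * sSup ((fun p => fderiv ℝ H (c • M.S ϑ.1 (m - 1) ω) p) '' M.Γ)) ∂P
        = ∫ ω, (H (c • M.S ϑ' (m - 1) ω)
          + fderiv ℝ H (c • M.S ϑ' (m - 1) ω) (c • M.Z ϑ' m ω)) ∂P := by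
      rw [M.B_eq ϑ.2 (m - 1) hH hCH hCL, M.A_eq hadm' hm1 hc0 hc1 hH hCH hCL,
        hSeq (m - 1) (by omega)]
      congr 2
      refine integral_congr_ae (Filter.Eventually.of_forall fun ω => ?_)
      simp only []
      congr 1
      funext j
      simp only [hϑ'm]
      by_cases h : 0 ≤ fderiv ℝ H (c • M.S ϑ.1 (m - 1) ω) (Pi.single j 1) <;> simp [h]
    calc ∫ ω, (H (c • M.S ϑ.1 (m - 1) ω)
          + c * sSup ((fun p => fderiv ℝ H (c • M.S ϑ.1 (m - 1) ω) p) '' M.Γ)) ∂P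
        = ∫ ω, (H (c • M.S ϑ' (m - 1) ω)
          + fderiv ℝ H (c • M.S ϑ' (m - 1) ω) (c • M.Z ϑ' m ω)) ∂P := hkey
      _ ≤ _ := by exact le_ciSup hbddA ⟨ϑ', hadm'⟩

end SMCO
end
end
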